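/- arXiv:2002.08767 — 5 statements merged into one kernel-verified Lean document; each statement's English description precedes it below -/
import Mathlib

section
/- (Proposition 3) The complex function K₃₄ = M_a·M_b* is a constant of the motion for H: {M_a·M_b*, H} = 0 at every point of U, where M_b* denotes the complex conjugate of M_b. -/
/-!
Along the flow of `H`, both `M_a` and `M_b` turn with the angular velocity `λ = J/(a² + b²)²` of the
polar angle of `(a, b)`: `{M_a, H} = iλ M_a` and `{M_b, H} = iλ M_b`. Since `H` is real, the Leibniz
rule gives `{M_a M_b*, H} = (iλ - iλ) M_a M_b* = 0`.

To compute these brackets write `M = N / √(a² + b²)`. A direct computation shows that both numerators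
satisfy `{N, H} = μ N` with `μ = (a p_a + b p_b + iJ)/(a² + b²)²`, while
`{√(a² + b²), H} = (Re μ) √(a² + b²)`; the quotient rule leaves `i (Im μ) = iλ`.
-/

noncomputable section

open Complex

/-! Partial derivatives of complex-valued functions on phase space `(a, b, pa, pb)`. -/

def pda (f : ℝ → ℝ → ℝ → ℝ → ℂ) (a b pa pb : ℝ) : ℂ := deriv (fun t => f t b pa pb) a
def pdb (f : ℝ → ℝ → ℝ → ℝ → ℂ) (a b pa pb : ℝ) : ℂ := deriv (fun t => f a t pa pb) b
def pdpa (f : ℝ → ℝ → ℝ → ℝ → ℂ) (a b pa pb : ℝ) : ℂ := deriv (fun t => f a b t pb) pa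
def pdpb (f : ℝ → ℝ → ℝ → ℝ → ℂ) (a b pa pb : ℝ) : ℂ := deriv (fun t => f a b pa t) pb

/-- Poisson bracket of two complex-valued functions on phase space. -/
def PB (f g : ℝ → ℝ → ℝ → ℝ → ℂ) (a b pa pb : ℝ) : ℂ :=
  pda f a b pa pb * pdpa g a b pa pb + pdb f a b pa pb * pdpb g a b pa pb
    - pdpa f a b pa pb * pda g a b pa pb - pdpb f a b pa pb * pdb g a b pa pb

/-! Partial derivatives of real-valued functions on phase space. -/

def pdaR (f : ℝ → ℝ → ℝ → ℝ → ℝ) (a b pa pb : ℝ) : ℝ := deriv (fun t => f t b pa pb) a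
def pdbR (f : ℝ → ℝ → ℝ → ℝ → ℝ) (a b pa pb : ℝ) : ℝ := deriv (fun t => f a t pa pb) b
def pdpaR (f : ℝ → ℝ → ℝ → ℝ → ℝ) (a b pa pb : ℝ) : ℝ := deriv (fun t => f a b t pb) pa
def pdpbR (f : ℝ → ℝ → ℝ → ℝ → ℝ) (a b pa pb : ℝ) : ℝ := deriv (fun t => f a b pa t) pb

/-- Poisson bracket of two real-valued functions on phase space. -/
def PBR (f g : ℝ → ℝ → ℝ → ℝ → ℝ) (a b pa pb : ℝ) : ℝ :=
  pdaR f a b pa pb * pdpaR g a b pa pb + pdbR f a b pa pb * pdpbR g a b pa pb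
    - pdpaR f a b pa pb * pdaR g a b pa pb - pdpbR f a b pa pb * pdbR g a b pa pb

/-- The angular momentum `J = a p_b - b p_a`. -/
def Jang (a b pa pb : ℝ) : ℝ := a * pb - b * pa

/-- The Kepler-related Hamiltonian `H_{K2}` (real-valued). -/
def HR (k1 k2 k3 : ℝ) (a b pa pb : ℝ) : ℝ :=
  (pa ^ 2 + pb ^ 2) / (2 * (a ^ 2 + b ^ 2)) + (k1 + k2 * a + k3 * b) / (a ^ 2 + b ^ 2)

/-- The Kepler-related Hamiltonian, viewed as a complex-valued function. -/
def HC (k1 k2 k3 : ℝ) (a b pa pb : ℝ) : ℂ := (HR k1 k2 k3 a b pa pb : ℂ)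

/-- The function `lambda = J/(a^2+b^2)^2`. -/
def lam (a b pa pb : ℝ) : ℝ := Jang a b pa pb / (a ^ 2 + b ^ 2) ^ 2

def A1 (a b pa pb : ℝ) : ℝ := (a ^ 2 - b ^ 2) / (a ^ 2 + b ^ 2)
def A2 (a b pa pb : ℝ) : ℝ := 2 * a * b / (a ^ 2 + b ^ 2)

/-- The complex function `A = A1 + i A2`. -/
def Afun (a b pa pb : ℝ) : ℂ := (A1 a b pa pb : ℂ) + Complex.I * (A2 a b pa pb : ℂ)

def B1 (k1 : ℝ) (a b pa pb : ℝ) : ℝ := (Jang a b pa pb) ^ 2 / (a ^ 2 + b ^ 2) + k1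
def B2 (k2 k3 : ℝ) (a b pa pb : ℝ) : ℝ :=
  Jang a b pa pb * (a * pa + b * pb) / (a ^ 2 + b ^ 2) + k3 * a - k2 * b

/-- The complex function `B = B1 + i B2`. -/
def Bfun (k1 k2 k3 : ℝ) (a b pa pb : ℝ) : ℂ :=
  (B1 k1 a b pa pb : ℂ) + Complex.I * (B2 k2 k3 a b pa pb : ℂ)

def Ma1 (k1 k2 k3 : ℝ) (a b pa pb : ℝ) : ℝ :=
  (Jang a b pa pb * pa - (k2 * b - k3 * a) * a) / Real.sqrt (a ^ 2 + b ^ 2)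
def Ma2 (k1 k2 k3 : ℝ) (a b pa pb : ℝ) : ℝ :=
  (-(Jang a b pa pb) * pb - 2 * k1 * a + (k2 * b - k3 * a) * b) / Real.sqrt (a ^ 2 + b ^ 2)

/-- The complex function `M_a = M_{a1} + i M_{a2}`. -/
def Mafun (k1 k2 k3 : ℝ) (a b pa pb : ℝ) : ℂ :=
  (Ma1 k1 k2 k3 a b pa pb : ℂ) + Complex.I * (Ma2 k1 k2 k3 a b pa pb : ℂ)

def Mb1 (k1 k2 k3 : ℝ) (a b pa pb : ℝ) : ℝ :=
  (Jang a b pa pb * pb - (k2 * b - k3 * a) * b) / Real.sqrt (a ^ 2 + b ^ 2)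
def Mb2 (k1 k2 k3 : ℝ) (a b pa pb : ℝ) : ℝ :=
  (Jang a b pa pb * pa - 2 * k1 * b - (k2 * b - k3 * a) * a) / Real.sqrt (a ^ 2 + b ^ 2)

/-- The complex function `M_b = M_{b1} + i M_{b2}`. -/
def Mbfun (k1 k2 k3 : ℝ) (a b pa pb : ℝ) : ℂ :=
  (Mb1 k1 k2 k3 a b pa pb : ℂ) + Complex.I * (Mb2 k1 k2 k3 a b pa pb : ℂ)

/-- Directional derivative of a complex-valued function along a (real) tangent vector `v ∈ ℝ⁴`,
with coordinates ordered `(a, b, p_a, p_b)`. -/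
def dd (f : ℝ → ℝ → ℝ → ℝ → ℂ) (a b pa pb : ℝ) (v : Fin 4 → ℝ) : ℂ :=
  pda f a b pa pb * (v 0 : ℂ) + pdb f a b pa pb * (v 1 : ℂ)
    + pdpa f a b pa pb * (v 2 : ℂ) + pdpb f a b pa pb * (v 3 : ℂ)

/-- Directional derivative of a real-valued function along a tangent vector `v ∈ ℝ⁴`. -/
def ddR (f : ℝ → ℝ → ℝ → ℝ → ℝ) (a b pa pb : ℝ) (v : Fin 4 → ℝ) : ℝ :=
  pdaR f a b pa pb * v 0 + pdbR f a b pa pb * v 1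
    + pdpaR f a b pa pb * v 2 + pdpbR f a b pa pb * v 3

/-- The 2-form `dF ∧ dG` evaluated on a pair of tangent vectors. -/
def wedgeR (f g : ℝ → ℝ → ℝ → ℝ → ℝ) (a b pa pb : ℝ) (u v : Fin 4 → ℝ) : ℝ :=
  ddR f a b pa pb u * ddR g a b pa pb v - ddR f a b pa pb v * ddR g a b pa pb u

/-- Hamiltonian vector field of a real-valued function:
`(∂f/∂p_a, ∂f/∂p_b, -∂f/∂a, -∂f/∂b)`. -/
def hamVF (f : ℝ → ℝ → ℝ → ℝ → ℝ) (a b pa pb : ℝ) : Fin 4 → ℝ :=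
  ![pdpaR f a b pa pb, pdpbR f a b pa pb, -pdaR f a b pa pb, -pdbR f a b pa pb]

/-- Hamiltonian vector field of a complex-valued function. -/
def hamVFC (f : ℝ → ℝ → ℝ → ℝ → ℂ) (a b pa pb : ℝ) : Fin 4 → ℂ :=
  ![pdpa f a b pa pb, pdpb f a b pa pb, -pda f a b pa pb, -pdb f a b pa pb]

/-- The Hamiltonian vector field `Γ` of `H_{K2}`. -/
def GammaVF (k1 k2 k3 : ℝ) (a b pa pb : ℝ) : Fin 4 → ℝ := hamVF (HR k1 k2 k3) a b pa pb

/-- The real first integral `J₃ = Re (A·B*)`. -/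
def J3fun (k1 k2 k3 : ℝ) (a b pa pb : ℝ) : ℝ :=
  (Afun a b pa pb * (starRingEnd ℂ) (Bfun k1 k2 k3 a b pa pb)).re

/-- The real first integral `J₄ = Im (A·B*)`. -/
def J4fun (k1 k2 k3 : ℝ) (a b pa pb : ℝ) : ℝ :=
  (Afun a b pa pb * (starRingEnd ℂ) (Bfun k1 k2 k3 a b pa pb)).im

/-- The explicit coordinate expression for `J₃`. -/
def J3ex (k1 k2 k3 : ℝ) (a b pa pb : ℝ) : ℝ :=
  Jang a b pa pb * (a * pb + b * pa) / (a ^ 2 + b ^ 2)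
    + 2 * ((k1 / 2) * ((a ^ 2 - b ^ 2) / (a ^ 2 + b ^ 2))
        - k2 * (a * b ^ 2 / (a ^ 2 + b ^ 2)) + k3 * (a ^ 2 * b / (a ^ 2 + b ^ 2)))

/-- The explicit coordinate expression for `J₄`. -/
def J4ex (k1 k2 k3 : ℝ) (a b pa pb : ℝ) : ℝ :=
  Jang a b pa pb * (a * pa - b * pb) / (a ^ 2 + b ^ 2)
    - 2 * (k1 * (a * b / (a ^ 2 + b ^ 2))
        + (k2 / 2) * (b * (a ^ 2 - b ^ 2) / (a ^ 2 + b ^ 2))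
        + (k3 / 2) * (a * (b ^ 2 - a ^ 2) / (a ^ 2 + b ^ 2)))

/-- The real first integral `K₃ = Re (M_a·M_b*)`. -/
def K3fun (k1 k2 k3 : ℝ) (a b pa pb : ℝ) : ℝ :=
  (Mafun k1 k2 k3 a b pa pb * (starRingEnd ℂ) (Mbfun k1 k2 k3 a b pa pb)).re

/-- The real first integral `K₄ = Im (M_a·M_b*)`. -/
def K4fun (k1 k2 k3 : ℝ) (a b pa pb : ℝ) : ℝ :=
  (Mafun k1 k2 k3 a b pa pb * (starRingEnd ℂ) (Mbfun k1 k2 k3 a b pa pb)).im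

/-- The real 2-form `Ω₁ = dA₁ ∧ dB₁ + dA₂ ∧ dB₂`. -/
def Om1 (k1 k2 k3 : ℝ) (a b pa pb : ℝ) (u v : Fin 4 → ℝ) : ℝ :=
  wedgeR A1 (B1 k1) a b pa pb u v + wedgeR A2 (B2 k2 k3) a b pa pb u v

/-- The real 2-form `Ω₂ = -dA₁ ∧ dB₂ + dA₂ ∧ dB₁`. -/
def Om2 (k1 k2 k3 : ℝ) (a b pa pb : ℝ) (u v : Fin 4 → ℝ) : ℝ :=
  -wedgeR A1 (B2 k2 k3) a b pa pb u v + wedgeR A2 (B1 k1) a b pa pb u v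

/-- The real 2-form `Ω_{M1} = dM_{a1} ∧ dM_{b1} + dM_{a2} ∧ dM_{b2}`. -/
def OmM1 (k1 k2 k3 : ℝ) (a b pa pb : ℝ) (u v : Fin 4 → ℝ) : ℝ :=
  wedgeR (Ma1 k1 k2 k3) (Mb1 k1 k2 k3) a b pa pb u v
    + wedgeR (Ma2 k1 k2 k3) (Mb2 k1 k2 k3) a b pa pb u v

/-- The real 2-form `Ω_{M2} = -dM_{a1} ∧ dM_{b2} + dM_{a2} ∧ dM_{b1}`. -/
def OmM2 (k1 k2 k3 : ℝ) (a b pa pb : ℝ) (u v : Fin 4 → ℝ) : ℝ :=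
  -wedgeR (Ma1 k1 k2 k3) (Mb2 k1 k2 k3) a b pa pb u v
    + wedgeR (Ma2 k1 k2 k3) (Mb1 k1 k2 k3) a b pa pb u v

/-- The standard basis vectors of `ℝ⁴`. -/
def ebasis (j : Fin 4) : Fin 4 → ℝ := Pi.single j 1

open ComplexConjugate

structure HasPartialDerivsAt (f : ℝ → ℝ → ℝ → ℝ → ℂ) (D : Fin 4 → ℂ) (a b pa pb : ℝ) : Prop where
  hasDerivAt_a : HasDerivAt (fun t => f t b pa pb) (D 0) a
  hasDerivAt_b : HasDerivAt (fun t => f a t pa pb) (D 1) b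
  hasDerivAt_pa : HasDerivAt (fun t => f a b t pb) (D 2) pa
  hasDerivAt_pb : HasDerivAt (fun t => f a b pa t) (D 3) pb

namespace HasPartialDerivsAt

variable {f g h : ℝ → ℝ → ℝ → ℝ → ℂ} {Df Dg Dh : Fin 4 → ℂ} {a b pa pb : ℝ}

theorem const (c : ℂ) : HasPartialDerivsAt (fun _ _ _ _ => c) 0 a b pa pb :=
  ⟨hasDerivAt_const _ _, hasDerivAt_const _ _, hasDerivAt_const _ _, hasDerivAt_const _ _⟩

theorem coord_a : HasPartialDerivsAt (fun a _ _ _ => (a : ℂ)) ![1, 0, 0, 0] a b pa pb :=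
  ⟨(hasDerivAt_id a).ofReal_comp, hasDerivAt_const _ _, hasDerivAt_const _ _, hasDerivAt_const _ _⟩

theorem coord_b : HasPartialDerivsAt (fun _ b _ _ => (b : ℂ)) ![0, 1, 0, 0] a b pa pb :=
  ⟨hasDerivAt_const _ _, (hasDerivAt_id b).ofReal_comp, hasDerivAt_const _ _, hasDerivAt_const _ _⟩

theorem coord_pa : HasPartialDerivsAt (fun _ _ pa _ => (pa : ℂ)) ![0, 0, 1, 0] a b pa pb :=
  ⟨hasDerivAt_const _ _, hasDerivAt_const _ _, (hasDerivAt_id pa).ofReal_comp, hasDerivAt_const _ _⟩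

theorem coord_pb : HasPartialDerivsAt (fun _ _ _ pb => (pb : ℂ)) ![0, 0, 0, 1] a b pa pb :=
  ⟨hasDerivAt_const _ _, hasDerivAt_const _ _, hasDerivAt_const _ _, (hasDerivAt_id pb).ofReal_comp⟩

theorem add (hf : HasPartialDerivsAt f Df a b pa pb) (hg : HasPartialDerivsAt g Dg a b pa pb) :
    HasPartialDerivsAt (fun a b pa pb => f a b pa pb + g a b pa pb) (Df + Dg) a b pa pb :=
  ⟨hf.1.add hg.1, hf.2.add hg.2, hf.3.add hg.3, hf.4.add hg.4⟩

theorem sub (hf : HasPartialDerivsAt f Df a b pa pb) (hg : HasPartialDerivsAt g Dg a b pa pb) :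
    HasPartialDerivsAt (fun a b pa pb => f a b pa pb - g a b pa pb) (Df - Dg) a b pa pb :=
  ⟨hf.1.sub hg.1, hf.2.sub hg.2, hf.3.sub hg.3, hf.4.sub hg.4⟩

theorem mul (hf : HasPartialDerivsAt f Df a b pa pb) (hg : HasPartialDerivsAt g Dg a b pa pb) :
    HasPartialDerivsAt (fun a b pa pb => f a b pa pb * g a b pa pb)
      (fun i => Df i * g a b pa pb + f a b pa pb * Dg i) a b pa pb :=
  ⟨hf.1.mul hg.1, hf.2.mul hg.2, hf.3.mul hg.3, hf.4.mul hg.4⟩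

theorem div (hf : HasPartialDerivsAt f Df a b pa pb) (hg : HasPartialDerivsAt g Dg a b pa pb)
    (hg0 : g a b pa pb ≠ 0) :
    HasPartialDerivsAt (fun a b pa pb => f a b pa pb / g a b pa pb)
      (fun i => (Df i * g a b pa pb - f a b pa pb * Dg i) / g a b pa pb ^ 2) a b pa pb :=
  ⟨hf.1.div hg.1 hg0, hf.2.div hg.2 hg0, hf.3.div hg.3 hg0, hf.4.div hg.4 hg0⟩

theorem star (hf : HasPartialDerivsAt f Df a b pa pb) :
    HasPartialDerivsAt (fun a b pa pb => conj (f a b pa pb)) (fun i => conj (Df i)) a b pa pb :=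
  ⟨hf.1.star, hf.2.star, hf.3.star, hf.4.star⟩

theorem unique {Df' : Fin 4 → ℂ} (hf : HasPartialDerivsAt f Df a b pa pb)
    (hf' : HasPartialDerivsAt f Df' a b pa pb) : Df = Df' := by
  funext i
  fin_cases i
  exacts [hf.1.unique hf'.1, hf.2.unique hf'.2, hf.3.unique hf'.3, hf.4.unique hf'.4]

theorem conj_eq_of_real {H : ℝ → ℝ → ℝ → ℝ → ℝ}
    (hH : HasPartialDerivsAt (fun a b pa pb => (H a b pa pb : ℂ)) Dh a b pa pb) (i : Fin 4) :
    conj (Dh i) = Dh i := by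
  have hH' := hH.star
  simp only [conj_ofReal] at hH'
  exact congrFun (hH'.unique hH) i

theorem pb_eq (hf : HasPartialDerivsAt f Df a b pa pb) (hg : HasPartialDerivsAt g Dg a b pa pb) :
    PB f g a b pa pb = Df 0 * Dg 2 + Df 1 * Dg 3 - Df 2 * Dg 0 - Df 3 * Dg 1 := by
  simp only [PB, pda, pdb, pdpa, pdpb, hf.hasDerivAt_a.deriv, hf.hasDerivAt_b.deriv,
    hf.hasDerivAt_pa.deriv, hf.hasDerivAt_pb.deriv, hg.hasDerivAt_a.deriv, hg.hasDerivAt_b.deriv,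
    hg.hasDerivAt_pa.deriv, hg.hasDerivAt_pb.deriv]

theorem pb_div (hf : HasPartialDerivsAt f Df a b pa pb) (hg : HasPartialDerivsAt g Dg a b pa pb)
    (hg0 : g a b pa pb ≠ 0) (hh : HasPartialDerivsAt h Dh a b pa pb) :
    PB (fun a b pa pb => f a b pa pb / g a b pa pb) h a b pa pb
      = (PB f h a b pa pb * g a b pa pb - f a b pa pb * PB g h a b pa pb) / g a b pa pb ^ 2 := by
  rw [(hf.div hg hg0).pb_eq hh, hf.pb_eq hh, hg.pb_eq hh]
  ring

theorem pb_mul_conj_eq_zero {H : ℝ → ℝ → ℝ → ℝ → ℝ}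
    (hf : HasPartialDerivsAt f Df a b pa pb) (hg : HasPartialDerivsAt g Dg a b pa pb)
    (hH : HasPartialDerivsAt (fun a b pa pb => (H a b pa pb : ℂ)) Dh a b pa pb) (ω : ℝ)
    (hfH : PB f (fun a b pa pb => (H a b pa pb : ℂ)) a b pa pb = I * ω * f a b pa pb)
    (hgH : PB g (fun a b pa pb => (H a b pa pb : ℂ)) a b pa pb = I * ω * g a b pa pb) :
    PB (fun a b pa pb => f a b pa pb * conj (g a b pa pb)) (fun a b pa pb => (H a b pa pb : ℂ))
      a b pa pb = 0 := by
  rw [hf.pb_eq hH] at hfH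
  rw [hg.pb_eq hH] at hgH
  have hgH' := congrArg conj hgH
  simp only [map_add, map_sub, map_mul, hH.conj_eq_of_real, conj_I, conj_ofReal] at hgH'
  rw [(hf.mul hg.star).pb_eq hH]
  linear_combination conj (g a b pa pb) * hfH + f a b pa pb * hgH'

end HasPartialDerivsAt

open HasPartialDerivsAt

def numMa (k1 k2 k3 a b pa pb : ℝ) : ℂ :=
  ((Jang a b pa pb * pa - (k2 * b - k3 * a) * a : ℝ) : ℂ)
    + I * ((-(Jang a b pa pb) * pb - 2 * k1 * a + (k2 * b - k3 * a) * b : ℝ) : ℂ)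

def numMb (k1 k2 k3 a b pa pb : ℝ) : ℂ :=
  ((Jang a b pa pb * pb - (k2 * b - k3 * a) * b : ℝ) : ℂ)
    + I * ((Jang a b pa pb * pa - 2 * k1 * b - (k2 * b - k3 * a) * a : ℝ) : ℂ)

section Kepler

variable {k1 k2 k3 a b pa pb : ℝ}

theorem Mafun_eq_div :
    Mafun k1 k2 k3 = fun a b pa pb => numMa k1 k2 k3 a b pa pb / (√(a ^ 2 + b ^ 2) : ℂ) := by
  funext a b pa pb
  simp only [Mafun, Ma1, Ma2, numMa, ofReal_div]
  ring

theorem Mbfun_eq_div :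
    Mbfun k1 k2 k3 = fun a b pa pb => numMb k1 k2 k3 a b pa pb / (√(a ^ 2 + b ^ 2) : ℂ) := by
  funext a b pa pb
  simp only [Mbfun, Mb1, Mb2, numMb, ofReal_div]
  ring

theorem ofReal_sqrt_sq_add_sq_ne_zero (hr : a ^ 2 + b ^ 2 ≠ 0) : (√(a ^ 2 + b ^ 2) : ℂ) ≠ 0 :=
  ofReal_ne_zero.2 (Real.sqrt_ne_zero'.2 (lt_of_le_of_ne (by positivity) hr.symm))

theorem hasPartialDerivsAt_linear (c d : ℝ) :
    HasPartialDerivsAt (fun a b _ _ => ((c * a + d * b : ℝ) : ℂ)) ![c, d, 0, 0] a b pa pb := by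
  convert ((const (c : ℂ)).mul coord_a).add ((const (d : ℂ)).mul coord_b) using 1
  · funext a b pa pb
    push_cast
    ring
  · funext i
    fin_cases i <;> simp

theorem hasPartialDerivsAt_jang :
    HasPartialDerivsAt (fun a b pa pb => (Jang a b pa pb : ℂ)) ![pb, -pa, -b, a] a b pa pb := by
  convert (coord_a.mul coord_pb).sub (coord_b.mul coord_pa) using 1
  · funext a b pa pb
    simp [Jang]
  · funext i
    fin_cases i <;> simp

/-- The gradient is written with `√(a² + b²)` in the numerator, so that `√(a² + b²)` enters the
bracket computations below only as a factor and `√(a² + b²) ^ 2 = a² + b²` is never needed. -/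
theorem hasPartialDerivsAt_sqrt_sq_add_sq (hr : a ^ 2 + b ^ 2 ≠ 0) :
    HasPartialDerivsAt (fun a b _ _ => (√(a ^ 2 + b ^ 2) : ℂ))
      ![(a * √(a ^ 2 + b ^ 2) / (a ^ 2 + b ^ 2) : ℝ), (b * √(a ^ 2 + b ^ 2) / (a ^ 2 + b ^ 2) : ℝ),
        0, 0] a b pa pb := by
  have hs : √(a ^ 2 + b ^ 2) ^ 2 = a ^ 2 + b ^ 2 := Real.sq_sqrt (by positivity)
  have hs0 : √(a ^ 2 + b ^ 2) ≠ 0 := by positivity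
  have key (x : ℝ) : 2 * x / (2 * √(a ^ 2 + b ^ 2)) = x * √(a ^ 2 + b ^ 2) / (a ^ 2 + b ^ 2) := by
    field_simp
    linear_combination -x * hs
  have ha : HasDerivAt (fun t => t ^ 2 + b ^ 2) (2 * a) a := by
    simpa using (hasDerivAt_pow 2 a).add_const (b ^ 2)
  have hb : HasDerivAt (fun t => a ^ 2 + t ^ 2) (2 * b) b := by
    simpa using (hasDerivAt_pow 2 b).const_add (a ^ 2)
  refine ⟨?_, ?_, hasDerivAt_const _ _, hasDerivAt_const _ _⟩
  · simpa [key] using (ha.sqrt hr).ofReal_comp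
  · simpa [key] using (hb.sqrt hr).ofReal_comp

theorem hasPartialDerivsAt_HC (hr : a ^ 2 + b ^ 2 ≠ 0) :
    HasPartialDerivsAt (HC k1 k2 k3)
      ![((k2 * (a ^ 2 + b ^ 2) - a * (pa ^ 2 + pb ^ 2 + 2 * (k1 + k2 * a + k3 * b)))
          / (a ^ 2 + b ^ 2) ^ 2 : ℝ),
        ((k3 * (a ^ 2 + b ^ 2) - b * (pa ^ 2 + pb ^ 2 + 2 * (k1 + k2 * a + k3 * b)))
          / (a ^ 2 + b ^ 2) ^ 2 : ℝ),
        (pa / (a ^ 2 + b ^ 2) : ℝ), (pb / (a ^ 2 + b ^ 2) : ℝ)] a b pa pb := by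
  have hr' : (a : ℂ) ^ 2 + (b : ℂ) ^ 2 ≠ 0 := by exact_mod_cast hr
  have hr'' : (a : ℂ) * a + b * b ≠ 0 := by simpa only [← sq] using hr'
  convert (((((coord_pa.mul coord_pa).add (coord_pb.mul coord_pb)).mul (const (1 / 2))).add
    (const (k1 : ℂ))).add (hasPartialDerivsAt_linear k2 k3)).div
    ((coord_a.mul coord_a).add (coord_b.mul coord_b)) hr'' using 1
  · funext a b pa pb
    simp only [HC, HR, div_eq_mul_inv, mul_inv]
    push_cast
    ring
  · funext i
    fin_cases i <;> simp only [Pi.add_apply, Pi.zero_apply] <;> push_cast <;>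
      field_simp <;> ring

theorem hasPartialDerivsAt_numMa :
    HasPartialDerivsAt (numMa k1 k2 k3)
      ![(pa * pb + 2 * k3 * a - k2 * b : ℝ) + I * (-(pb ^ 2) - 2 * k1 - k3 * b : ℝ),
        (-(pa ^ 2) - k2 * a : ℝ) + I * (pa * pb + 2 * k2 * b - k3 * a : ℝ),
        (a * pb - 2 * b * pa : ℝ) + I * (b * pb : ℝ),
        (a * pa : ℝ) + I * (b * pa - 2 * a * pb : ℝ)] a b pa pb := by
  have hJ := hasPartialDerivsAt_jang (a := a) (b := b) (pa := pa) (pb := pb)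
  have hq := hasPartialDerivsAt_linear (a := a) (b := b) (pa := pa) (pb := pb) (-k3) k2
  convert ((hJ.mul coord_pa).sub (hq.mul coord_a)).add ((const I).mul
    (((hq.mul coord_b).sub (hJ.mul coord_pb)).sub ((const (2 * k1 : ℂ)).mul coord_a))) using 1
  · funext a b pa pb
    simp only [numMa]
    push_cast
    ring
  · funext i
    fin_cases i <;> simp only [Pi.add_apply, Pi.sub_apply, Pi.zero_apply, Jang] <;>
      push_cast <;> ring

theorem hasPartialDerivsAt_numMb :
    HasPartialDerivsAt (numMb k1 k2 k3)
      ![(pb ^ 2 + k3 * b : ℝ) + I * (pa * pb - k2 * b + 2 * k3 * a : ℝ),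
        (-(pa * pb) - 2 * k2 * b + k3 * a : ℝ) + I * (-(pa ^ 2) - 2 * k1 - k2 * a : ℝ),
        (-(b * pb) : ℝ) + I * (a * pb - 2 * b * pa : ℝ),
        (2 * a * pb - b * pa : ℝ) + I * (a * pa : ℝ)] a b pa pb := by
  have hJ := hasPartialDerivsAt_jang (a := a) (b := b) (pa := pa) (pb := pb)
  have hq := hasPartialDerivsAt_linear (a := a) (b := b) (pa := pa) (pb := pb) (-k3) k2
  convert ((hJ.mul coord_pb).sub (hq.mul coord_b)).add ((const I).mul
    (((hJ.mul coord_pa).sub ((const (2 * k1 : ℂ)).mul coord_b)).sub (hq.mul coord_a))) using 1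
  · funext a b pa pb
    simp only [numMb]
    push_cast
    ring
  · funext i
    fin_cases i <;> simp only [Pi.add_apply, Pi.sub_apply, Pi.zero_apply, Jang] <;>
      push_cast <;> ring

theorem pb_sqrt_sq_add_sq_HC (hr : a ^ 2 + b ^ 2 ≠ 0) :
    PB (fun a b _ _ => (√(a ^ 2 + b ^ 2) : ℂ)) (HC k1 k2 k3) a b pa pb
      = (a * pa + b * pb) / (a ^ 2 + b ^ 2) ^ 2 * √(a ^ 2 + b ^ 2) := by
  have hr' : (a : ℂ) ^ 2 + (b : ℂ) ^ 2 ≠ 0 := by exact_mod_cast hr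
  rw [(hasPartialDerivsAt_sqrt_sq_add_sq hr).pb_eq (hasPartialDerivsAt_HC hr)]
  simp only [Matrix.cons_val_zero, Matrix.cons_val_one, Matrix.cons_val, ofReal_div, ofReal_mul,
    ofReal_add, ofReal_pow, ofReal_sub, ofReal_ofNat, zero_mul, sub_zero]
  field_simp

theorem pb_numMa_HC (hr : a ^ 2 + b ^ 2 ≠ 0) :
    PB (numMa k1 k2 k3) (HC k1 k2 k3) a b pa pb
      = (a * pa + b * pb + I * Jang a b pa pb) / (a ^ 2 + b ^ 2) ^ 2 * numMa k1 k2 k3 a b pa pb := by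
  have hr' : (a : ℂ) ^ 2 + (b : ℂ) ^ 2 ≠ 0 := by exact_mod_cast hr
  rw [hasPartialDerivsAt_numMa.pb_eq (hasPartialDerivsAt_HC hr)]
  simp only [Matrix.cons_val_zero, Matrix.cons_val_one, Matrix.cons_val, numMa, Jang, ofReal_sub,
    ofReal_add, ofReal_mul, ofReal_ofNat, ofReal_neg, ofReal_pow, ofReal_div]
  field_simp
  ring_nf
  simp only [I_sq]
  ring

theorem pb_numMb_HC (hr : a ^ 2 + b ^ 2 ≠ 0) :
    PB (numMb k1 k2 k3) (HC k1 k2 k3) a b pa pb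
      = (a * pa + b * pb + I * Jang a b pa pb) / (a ^ 2 + b ^ 2) ^ 2 * numMb k1 k2 k3 a b pa pb := by
  have hr' : (a : ℂ) ^ 2 + (b : ℂ) ^ 2 ≠ 0 := by exact_mod_cast hr
  rw [hasPartialDerivsAt_numMb.pb_eq (hasPartialDerivsAt_HC hr)]
  simp only [Matrix.cons_val_zero, Matrix.cons_val_one, Matrix.cons_val, numMb, Jang, ofReal_sub,
    ofReal_add, ofReal_mul, ofReal_ofNat, ofReal_neg, ofReal_pow, ofReal_div]
  field_simp
  ring_nf
  simp only [I_sq]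
  ring

theorem exists_hasPartialDerivsAt_Mafun (hr : a ^ 2 + b ^ 2 ≠ 0) :
    ∃ D, HasPartialDerivsAt (Mafun k1 k2 k3) D a b pa pb :=
  ⟨_, Mafun_eq_div ▸ hasPartialDerivsAt_numMa.div (hasPartialDerivsAt_sqrt_sq_add_sq hr)
    (ofReal_sqrt_sq_add_sq_ne_zero hr)⟩

theorem exists_hasPartialDerivsAt_Mbfun (hr : a ^ 2 + b ^ 2 ≠ 0) :
    ∃ D, HasPartialDerivsAt (Mbfun k1 k2 k3) D a b pa pb :=
  ⟨_, Mbfun_eq_div ▸ hasPartialDerivsAt_numMb.div (hasPartialDerivsAt_sqrt_sq_add_sq hr)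
    (ofReal_sqrt_sq_add_sq_ne_zero hr)⟩

theorem pb_Mafun_HC (hr : a ^ 2 + b ^ 2 ≠ 0) :
    PB (Mafun k1 k2 k3) (HC k1 k2 k3) a b pa pb = I * lam a b pa pb * Mafun k1 k2 k3 a b pa pb := by
  have hr' : (a : ℂ) ^ 2 + (b : ℂ) ^ 2 ≠ 0 := by exact_mod_cast hr
  have hs := ofReal_sqrt_sq_add_sq_ne_zero hr
  rw [Mafun_eq_div, hasPartialDerivsAt_numMa.pb_div (hasPartialDerivsAt_sqrt_sq_add_sq hr) hs
    (hasPartialDerivsAt_HC hr), pb_numMa_HC hr, pb_sqrt_sq_add_sq_HC hr]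
  simp only [lam]
  push_cast
  field_simp
  ring

theorem pb_Mbfun_HC (hr : a ^ 2 + b ^ 2 ≠ 0) :
    PB (Mbfun k1 k2 k3) (HC k1 k2 k3) a b pa pb = I * lam a b pa pb * Mbfun k1 k2 k3 a b pa pb := by
  have hr' : (a : ℂ) ^ 2 + (b : ℂ) ^ 2 ≠ 0 := by exact_mod_cast hr
  have hs := ofReal_sqrt_sq_add_sq_ne_zero hr
  rw [Mbfun_eq_div, hasPartialDerivsAt_numMb.pb_div (hasPartialDerivsAt_sqrt_sq_add_sq hr) hs
    (hasPartialDerivsAt_HC hr), pb_numMb_HC hr, pb_sqrt_sq_add_sq_HC hr]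
  simp only [lam]
  push_cast
  field_simp
  ring

end Kepler

/-- Proposition 3: `K₃₄ = M_a·M_b*` is a constant of the motion:
`{M_a·M_b*, H} = 0`. -/
theorem stmt13 (k1 k2 k3 : ℝ) (a b pa pb : ℝ) (hU : a ^ 2 + b ^ 2 ≠ 0) :
    PB (fun a b pa pb =>
        Mafun k1 k2 k3 a b pa pb * (starRingEnd ℂ) (Mbfun k1 k2 k3 a b pa pb))
      (HC k1 k2 k3) a b pa pb = 0 := by
  obtain ⟨_, hMa⟩ : ∃ D, HasPartialDerivsAt (Mafun k1 k2 k3) D a b pa pb :=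
    exists_hasPartialDerivsAt_Mafun hU
  obtain ⟨_, hMb⟩ : ∃ D, HasPartialDerivsAt (Mbfun k1 k2 k3) D a b pa pb :=
    exists_hasPartialDerivsAt_Mbfun hU
  exact hMa.pb_mul_conj_eq_zero hMb (hasPartialDerivsAt_HC hU) (lam a b pa pb)
    (pb_Mafun_HC hU) (pb_Mbfun_HC hU)
end
end

section
/- At every point of U the squared moduli of M_a and M_b satisfy M_a·M_a* = 2(J²H + k₁J₃ + J(k₃ p_a − k₂ p_b)) + (k₂ b − k₃ a)² + 2k₁² and M_b·M_b* = 2(J²H − k₁J₃ + J(k₃ p_a − k₂ p_b)) + (k₂ b − k₃ a)² + 2k₁², where J₃ = J·(a p_b + b p_a)/(a² + b²) + 2[ (k₁/2)(a² − b²)/(a² + b²) − k₂ a b²/(a² + b²) + k₃ a² b/(a² + b²) ]. -/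
noncomputable section

open Complex

/-! Both identities reduce to `|x + i y|² = x² + y²` for the real and imaginary parts of `M_a`,
`M_b`. Those parts are polynomials divided by `√(a² + b²)`, so their squares are rational functions
with denominator `a² + b²`, and clearing it leaves a polynomial identity. -/

theorem Complex.ofReal_add_I_mul_mul_conj (x y : ℝ) :
    ((x : ℂ) + I * y) * (starRingEnd ℂ) ((x : ℂ) + I * y) = ((x ^ 2 + y ^ 2 : ℝ) : ℂ) := by
  rw [mul_comm I, Complex.mul_conj, Complex.normSq_add_mul_I]

theorem div_sqrt_sq {r : ℝ} (hr : 0 ≤ r) (x : ℝ) : (x / Real.sqrt r) ^ 2 = x ^ 2 / r := by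
  rw [div_pow, Real.sq_sqrt hr]

section

variable (k1 k2 k3 a b pa pb : ℝ)

theorem Ma1_sq_add_Ma2_sq (hU : a ^ 2 + b ^ 2 ≠ 0) :
    Ma1 k1 k2 k3 a b pa pb ^ 2 + Ma2 k1 k2 k3 a b pa pb ^ 2 =
      2 * ((Jang a b pa pb) ^ 2 * HR k1 k2 k3 a b pa pb + k1 * J3ex k1 k2 k3 a b pa pb
        + Jang a b pa pb * (k3 * pa - k2 * pb)) + (k2 * b - k3 * a) ^ 2 + 2 * k1 ^ 2 := by
  have hr : 0 ≤ a ^ 2 + b ^ 2 := by positivity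
  rw [Ma1, Ma2, div_sqrt_sq hr, div_sqrt_sq hr, HR, J3ex, Jang]
  field_simp
  ring

theorem Mb1_sq_add_Mb2_sq (hU : a ^ 2 + b ^ 2 ≠ 0) :
    Mb1 k1 k2 k3 a b pa pb ^ 2 + Mb2 k1 k2 k3 a b pa pb ^ 2 =
      2 * ((Jang a b pa pb) ^ 2 * HR k1 k2 k3 a b pa pb - k1 * J3ex k1 k2 k3 a b pa pb
        + Jang a b pa pb * (k3 * pa - k2 * pb)) + (k2 * b - k3 * a) ^ 2 + 2 * k1 ^ 2 := by
  have hr : 0 ≤ a ^ 2 + b ^ 2 := by positivity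
  rw [Mb1, Mb2, div_sqrt_sq hr, div_sqrt_sq hr, HR, J3ex, Jang]
  field_simp
  ring

end

/-- the squared moduli of `M_a` and `M_b`. -/
theorem stmt14 (k1 k2 k3 : ℝ) (a b pa pb : ℝ) (hU : a ^ 2 + b ^ 2 ≠ 0) :
    Mafun k1 k2 k3 a b pa pb * (starRingEnd ℂ) (Mafun k1 k2 k3 a b pa pb) =
        ((2 * ((Jang a b pa pb) ^ 2 * HR k1 k2 k3 a b pa pb
            + k1 * J3ex k1 k2 k3 a b pa pb
            + Jang a b pa pb * (k3 * pa - k2 * pb))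
          + (k2 * b - k3 * a) ^ 2 + 2 * k1 ^ 2 : ℝ) : ℂ) ∧
      Mbfun k1 k2 k3 a b pa pb * (starRingEnd ℂ) (Mbfun k1 k2 k3 a b pa pb) =
        ((2 * ((Jang a b pa pb) ^ 2 * HR k1 k2 k3 a b pa pb
            - k1 * J3ex k1 k2 k3 a b pa pb
            + Jang a b pa pb * (k3 * pa - k2 * pb))
          + (k2 * b - k3 * a) ^ 2 + 2 * k1 ^ 2 : ℝ) : ℂ) := by
  rw [Mafun, Mbfun, Complex.ofReal_add_I_mul_mul_conj, Complex.ofReal_add_I_mul_mul_conj,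
    Ma1_sq_add_Ma2_sq _ _ _ _ _ _ _ hU, Mb1_sq_add_Mb2_sq _ _ _ _ _ _ _ hU]
  exact ⟨rfl, rfl⟩
end
end

section
/- At every point of U one has M_a·M_a* − M_b·M_b* = 4k₁·[ J·(a p_b + b p_a)/(a² + b²) + 2( (k₁/2)(a² − b²)/(a² + b²) − k₂ a b²/(a² + b²) + k₃ a² b/(a² + b²) ) ]; that is, the difference of the squared moduli of M_a and M_b equals 4k₁ times the Laplace–Runge–Lenz component J₃ = Re(A·B*). -/
noncomputable section

open Complex

/- `M_a M_a* - M_b M_b*` is real, and after clearing the common factor `1/(a² + b²)` it is a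
polynomial identity in which `J` and `c = k₂ b - k₃ a` are free: the squared moduli differ by
`4 k₁` times the numerator of `J₃`. -/

open ComplexConjugate

theorem Complex.mul_conj_sub_mul_conj (z w : ℂ) :
    z * conj z - w * conj w = ((normSq z - normSq w : ℝ) : ℂ) := by
  rw [mul_conj, mul_conj, ofReal_sub]

theorem Complex.normSq_add_I_mul (x y : ℝ) : normSq (x + I * y) = x ^ 2 + y ^ 2 := by
  rw [mul_comm, normSq_add_mul_I]

theorem sq_add_sq_sub_sq_add_sq_eq {R : Type*} [CommRing R] (J c k a b pa pb : R) :
    (J * pa - c * a) ^ 2 + (-J * pb - 2 * k * a + c * b) ^ 2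
      - ((J * pb - c * b) ^ 2 + (J * pa - 2 * k * b - c * a) ^ 2)
      = 4 * k * (J * (a * pb + b * pa) + k * (a ^ 2 - b ^ 2) - 2 * c * a * b) := by
  ring

theorem div_sqrt_sq_add_sq_sq (x a b : ℝ) :
    (x / Real.sqrt (a ^ 2 + b ^ 2)) ^ 2 = x ^ 2 / (a ^ 2 + b ^ 2) := by
  rw [div_pow, Real.sq_sqrt (by positivity)]

theorem normSq_Mafun_sub_normSq_Mbfun (k1 k2 k3 a b pa pb : ℝ) :
    normSq (Mafun k1 k2 k3 a b pa pb) - normSq (Mbfun k1 k2 k3 a b pa pb)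
      = 4 * k1 * (Jang a b pa pb * (a * pb + b * pa) + k1 * (a ^ 2 - b ^ 2)
          - 2 * (k2 * b - k3 * a) * a * b) / (a ^ 2 + b ^ 2) := by
  simp only [Mafun, Mbfun, Ma1, Ma2, Mb1, Mb2, normSq_add_I_mul, div_sqrt_sq_add_sq_sq]
  rw [← sq_add_sq_sub_sq_add_sq_eq]
  ring

theorem stmt15_general (k1 k2 k3 : ℝ) (a b pa pb : ℝ) :
    Mafun k1 k2 k3 a b pa pb * (starRingEnd ℂ) (Mafun k1 k2 k3 a b pa pb)
      - Mbfun k1 k2 k3 a b pa pb * (starRingEnd ℂ) (Mbfun k1 k2 k3 a b pa pb) =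
      ((4 * k1 * (Jang a b pa pb * (a * pb + b * pa) / (a ^ 2 + b ^ 2)
          + 2 * ((k1 / 2) * ((a ^ 2 - b ^ 2) / (a ^ 2 + b ^ 2))
            - k2 * (a * b ^ 2 / (a ^ 2 + b ^ 2))
            + k3 * (a ^ 2 * b / (a ^ 2 + b ^ 2)))) : ℝ) : ℂ) := by
  rw [Complex.mul_conj_sub_mul_conj, normSq_Mafun_sub_normSq_Mbfun]
  congr 1
  ring

/-- `M_a·M_a* - M_b·M_b* = 4 k₁ J₃`, with `J₃` in its explicit coordinate form. -/
theorem stmt15 (k1 k2 k3 : ℝ) (a b pa pb : ℝ) (hU : a ^ 2 + b ^ 2 ≠ 0) :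
    Mafun k1 k2 k3 a b pa pb * (starRingEnd ℂ) (Mafun k1 k2 k3 a b pa pb)
      - Mbfun k1 k2 k3 a b pa pb * (starRingEnd ℂ) (Mbfun k1 k2 k3 a b pa pb) =
      ((4 * k1 * (Jang a b pa pb * (a * pb + b * pa) / (a ^ 2 + b ^ 2)
          + 2 * ((k1 / 2) * ((a ^ 2 - b ^ 2) / (a ^ 2 + b ^ 2))
            - k2 * (a * b ^ 2 / (a ^ 2 + b ^ 2))
            + k3 * (a ^ 2 * b / (a ^ 2 + b ^ 2)))) : ℝ) : ℂ) :=
  stmt15_general k1 k2 k3 a b pa pb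
end
end

section
/- Write M_a = M_{a1} + iM_{a2}, M_b = M_{b1} + iM_{b2}, K₃ = Re(M_a·M_b*), K₄ = Im(M_a·M_b*), and define the real 2-forms Ω_{M1} = dM_{a1} ∧ dM_{b1} + dM_{a2} ∧ dM_{b2} and Ω_{M2} = −dM_{a1} ∧ dM_{b2} + dM_{a2} ∧ dM_{b1} on U. Then for every point x ∈ U and every tangent vector v ∈ ℝ⁴: Ω_{M1}(x)(Γ(x), v) = −λ(x)·dK₄(x)[v] and Ω_{M2}(x)(Γ(x), v) = λ(x)·dK₃(x)[v]; i.e. Γ is quasi-bi-Hamiltonian with respect to the pairs (ω₀, Ω_{M1}) and (ω₀, Ω_{M2}). -/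
noncomputable section

open Complex

/-
The flow of `Γ` rotates both `M_a` and `M_b` at the angular rate `λ`: `dM_a[Γ] = iλ M_a` and
`dM_b[Γ] = iλ M_b`, which is a direct computation with the explicit partial derivatives. Since
`Ω_{M1} + i Ω_{M2} = dM_a ∧ dM_b*`, evaluating on `(Γ, v)` gives
`iλ (M_a dM_b*[v] + M_b* dM_a[v]) = iλ d(M_a M_b*)[v] = iλ (dK₃ + i dK₄)[v]`,
and the real and imaginary parts of this are the two identities.
-/

open Real

/-- The derivative is kept in the form `(…) / √(q x)`, so that identities between such quotients
become polynomial after clearing denominators. -/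
theorem HasDerivAt.div_sqrt {f q : ℝ → ℝ} {f' q' x : ℝ} (hf : HasDerivAt f f' x)
    (hq : HasDerivAt q q' x) (hx : 0 < q x) :
    HasDerivAt (fun y => f y / √(q y)) ((f' - f x * q' / (2 * q x)) / √(q x)) x := by
  have hs : √(q x) ≠ 0 := (sqrt_pos.2 hx).ne'
  refine (hf.fun_div (hq.sqrt hx.ne') hs).congr_deriv ?_
  rw [sq, mul_self_sqrt hx.le]
  field_simp
  rw [sq_sqrt hx.le]
  ring

structure HasPartialsAt (f : ℝ → ℝ → ℝ → ℝ → ℝ) (g : Fin 4 → ℝ) (a b pa pb : ℝ) : Prop where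
  da : HasDerivAt (fun t => f t b pa pb) (g 0) a
  db : HasDerivAt (fun t => f a t pa pb) (g 1) b
  dpa : HasDerivAt (fun t => f a b t pb) (g 2) pa
  dpb : HasDerivAt (fun t => f a b pa t) (g 3) pb

namespace HasPartialsAt

variable {f g : ℝ → ℝ → ℝ → ℝ → ℝ} {gf gg : Fin 4 → ℝ} {a b pa pb : ℝ}

theorem congr_grad (hf : HasPartialsAt f gf a b pa pb) (h : gf = gg) :
    HasPartialsAt f gg a b pa pb :=
  h ▸ hf

theorem const (c : ℝ) : HasPartialsAt (fun _ _ _ _ => c) 0 a b pa pb :=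
  ⟨hasDerivAt_const _ _, hasDerivAt_const _ _, hasDerivAt_const _ _, hasDerivAt_const _ _⟩

theorem coord_a : HasPartialsAt (fun a _ _ _ => a) ![1, 0, 0, 0] a b pa pb :=
  ⟨hasDerivAt_id _, hasDerivAt_const _ _, hasDerivAt_const _ _, hasDerivAt_const _ _⟩

theorem coord_b : HasPartialsAt (fun _ b _ _ => b) ![0, 1, 0, 0] a b pa pb :=
  ⟨hasDerivAt_const _ _, hasDerivAt_id _, hasDerivAt_const _ _, hasDerivAt_const _ _⟩

theorem coord_pa : HasPartialsAt (fun _ _ pa _ => pa) ![0, 0, 1, 0] a b pa pb :=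
  ⟨hasDerivAt_const _ _, hasDerivAt_const _ _, hasDerivAt_id _, hasDerivAt_const _ _⟩

theorem coord_pb : HasPartialsAt (fun _ _ _ pb => pb) ![0, 0, 0, 1] a b pa pb :=
  ⟨hasDerivAt_const _ _, hasDerivAt_const _ _, hasDerivAt_const _ _, hasDerivAt_id _⟩

theorem add (hf : HasPartialsAt f gf a b pa pb) (hg : HasPartialsAt g gg a b pa pb) :
    HasPartialsAt (fun a b pa pb => f a b pa pb + g a b pa pb) (gf + gg) a b pa pb :=
  ⟨hf.da.add hg.da, hf.db.add hg.db, hf.dpa.add hg.dpa, hf.dpb.add hg.dpb⟩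

theorem neg (hf : HasPartialsAt f gf a b pa pb) :
    HasPartialsAt (fun a b pa pb => -f a b pa pb) (-gf) a b pa pb :=
  ⟨hf.da.neg, hf.db.neg, hf.dpa.neg, hf.dpb.neg⟩

theorem sub (hf : HasPartialsAt f gf a b pa pb) (hg : HasPartialsAt g gg a b pa pb) :
    HasPartialsAt (fun a b pa pb => f a b pa pb - g a b pa pb) (gf - gg) a b pa pb :=
  ⟨hf.da.sub hg.da, hf.db.sub hg.db, hf.dpa.sub hg.dpa, hf.dpb.sub hg.dpb⟩

theorem mul (hf : HasPartialsAt f gf a b pa pb) (hg : HasPartialsAt g gg a b pa pb) :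
    HasPartialsAt (fun a b pa pb => f a b pa pb * g a b pa pb)
      (fun i => gf i * g a b pa pb + f a b pa pb * gg i) a b pa pb :=
  ⟨hf.da.mul hg.da, hf.db.mul hg.db, hf.dpa.mul hg.dpa, hf.dpb.mul hg.dpb⟩

theorem pow (hf : HasPartialsAt f gf a b pa pb) (n : ℕ) :
    HasPartialsAt (fun a b pa pb => f a b pa pb ^ n)
      (fun i => n * f a b pa pb ^ (n - 1) * gf i) a b pa pb :=
  ⟨hf.da.fun_pow n, hf.db.fun_pow n, hf.dpa.fun_pow n, hf.dpb.fun_pow n⟩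

theorem div (hf : HasPartialsAt f gf a b pa pb) (hg : HasPartialsAt g gg a b pa pb)
    (hx : g a b pa pb ≠ 0) :
    HasPartialsAt (fun a b pa pb => f a b pa pb / g a b pa pb)
      (fun i => (gf i * g a b pa pb - f a b pa pb * gg i) / g a b pa pb ^ 2) a b pa pb :=
  ⟨hf.da.fun_div hg.da hx, hf.db.fun_div hg.db hx, hf.dpa.fun_div hg.dpa hx,
    hf.dpb.fun_div hg.dpb hx⟩

theorem div_sqrt (hf : HasPartialsAt f gf a b pa pb) (hg : HasPartialsAt g gg a b pa pb)
    (hx : 0 < g a b pa pb) :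
    HasPartialsAt (fun a b pa pb => f a b pa pb / √(g a b pa pb))
      (fun i => (gf i - f a b pa pb * gg i / (2 * g a b pa pb)) / √(g a b pa pb)) a b pa pb :=
  ⟨hf.da.div_sqrt hg.da hx, hf.db.div_sqrt hg.db hx, hf.dpa.div_sqrt hg.dpa hx,
    hf.dpb.div_sqrt hg.dpb hx⟩

theorem ddR_eq (hf : HasPartialsAt f gf a b pa pb) (v : Fin 4 → ℝ) :
    ddR f a b pa pb v = gf 0 * v 0 + gf 1 * v 1 + gf 2 * v 2 + gf 3 * v 3 := by
  rw [ddR, pdaR, pdbR, pdpaR, pdpbR, hf.da.deriv, hf.db.deriv, hf.dpa.deriv, hf.dpb.deriv]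

theorem hamVF_eq (hf : HasPartialsAt f gf a b pa pb) :
    hamVF f a b pa pb = ![gf 2, gf 3, -gf 0, -gf 1] := by
  rw [hamVF, pdpaR, pdpbR, pdaR, pdbR, hf.da.deriv, hf.db.deriv, hf.dpa.deriv, hf.dpb.deriv]

end HasPartialsAt

open HasPartialsAt in
theorem hasPartialsAt_normSq {a b pa pb : ℝ} :
    HasPartialsAt (fun a b _ _ => a ^ 2 + b ^ 2) ![2 * a, 2 * b, 0, 0] a b pa pb := by
  refine ((coord_a.pow 2).add (coord_b.pow 2)).congr_grad ?_
  ext i; fin_cases i <;> simp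

open HasPartialsAt in
theorem hasPartialsAt_Jang {a b pa pb : ℝ} :
    HasPartialsAt Jang ![pb, -pa, -b, a] a b pa pb := by
  refine ((coord_a.mul coord_pb).sub (coord_b.mul coord_pa)).congr_grad ?_
  ext i; fin_cases i <;> simp

/-- For `F = f₁ + i f₂`, the two identities say `dF[X] = i l F`. -/
structure RotatesAt (X : Fin 4 → ℝ) (l : ℝ) (f₁ f₂ : ℝ → ℝ → ℝ → ℝ → ℝ) (a b pa pb : ℝ) :
    Prop where
  hasPartialsAt_fst : ∃ g, HasPartialsAt f₁ g a b pa pb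
  hasPartialsAt_snd : ∃ g, HasPartialsAt f₂ g a b pa pb
  ddR_fst : ddR f₁ a b pa pb X = -l * f₂ a b pa pb
  ddR_snd : ddR f₂ a b pa pb X = l * f₁ a b pa pb

namespace RotatesAt

variable {X : Fin 4 → ℝ} {l : ℝ} {f₁ f₂ h₁ h₂ : ℝ → ℝ → ℝ → ℝ → ℝ} {a b pa pb : ℝ}

theorem wedgeR_add_wedgeR (hf : RotatesAt X l f₁ f₂ a b pa pb)
    (hh : RotatesAt X l h₁ h₂ a b pa pb) (v : Fin 4 → ℝ) :
    wedgeR f₁ h₁ a b pa pb X v + wedgeR f₂ h₂ a b pa pb X v =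
      -l * ddR (fun a b pa pb => f₂ a b pa pb * h₁ a b pa pb - f₁ a b pa pb * h₂ a b pa pb)
        a b pa pb v := by
  obtain ⟨⟨_, hf₁⟩, ⟨_, hf₂⟩, hf₁X, hf₂X⟩ := hf
  obtain ⟨⟨_, hh₁⟩, ⟨_, hh₂⟩, hh₁X, hh₂X⟩ := hh
  rw [wedgeR, wedgeR, hf₁X, hf₂X, hh₁X, hh₂X, ((hf₂.mul hh₁).sub (hf₁.mul hh₂)).ddR_eq,
    hf₁.ddR_eq, hf₂.ddR_eq, hh₁.ddR_eq, hh₂.ddR_eq]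
  simp only [Pi.sub_apply]
  ring

theorem neg_wedgeR_add_wedgeR (hf : RotatesAt X l f₁ f₂ a b pa pb)
    (hh : RotatesAt X l h₁ h₂ a b pa pb) (v : Fin 4 → ℝ) :
    -wedgeR f₁ h₂ a b pa pb X v + wedgeR f₂ h₁ a b pa pb X v =
      l * ddR (fun a b pa pb => f₁ a b pa pb * h₁ a b pa pb + f₂ a b pa pb * h₂ a b pa pb)
        a b pa pb v := by
  obtain ⟨⟨_, hf₁⟩, ⟨_, hf₂⟩, hf₁X, hf₂X⟩ := hf
  obtain ⟨⟨_, hh₁⟩, ⟨_, hh₂⟩, hh₁X, hh₂X⟩ := hh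
  rw [wedgeR, wedgeR, hf₁X, hf₂X, hh₁X, hh₂X, ((hf₁.mul hh₁).add (hf₂.mul hh₂)).ddR_eq,
    hf₁.ddR_eq, hf₂.ddR_eq, hh₁.ddR_eq, hh₂.ddR_eq]
  simp only [Pi.add_apply]
  ring

end RotatesAt

section Kepler

open HasPartialsAt

variable (k1 k2 k3 a b pa pb : ℝ)

theorem gammaVF_eq (hU : a ^ 2 + b ^ 2 ≠ 0) :
    GammaVF k1 k2 k3 a b pa pb = ![pa / (a ^ 2 + b ^ 2), pb / (a ^ 2 + b ^ 2),
      (a * (pa ^ 2 + pb ^ 2 + 2 * (k1 + k2 * a + k3 * b)) - k2 * (a ^ 2 + b ^ 2))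
        / (a ^ 2 + b ^ 2) ^ 2,
      (b * (pa ^ 2 + pb ^ 2 + 2 * (k1 + k2 * a + k3 * b)) - k3 * (a ^ 2 + b ^ 2))
        / (a ^ 2 + b ^ 2) ^ 2] := by
  have hH : HasPartialsAt (HR k1 k2 k3) _ a b pa pb :=
    ((((coord_pa.pow 2).add (coord_pb.pow 2)).div ((const 2).mul hasPartialsAt_normSq)
      (mul_ne_zero two_ne_zero hU)).add
    ((((const k1).add ((const k2).mul coord_a)).add ((const k3).mul coord_b)).div
      hasPartialsAt_normSq hU))
  rw [GammaVF, hH.hamVF_eq]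
  simp only [Nat.cast_ofNat, Nat.add_one_sub_one, pow_one, Pi.add_apply, Pi.zero_apply, zero_mul,
    zero_add, Matrix.cons_val, mul_one, mul_zero, add_zero, sub_zero, sub_self, zero_div,
    Matrix.cons_val_zero, zero_sub, neg_add_rev, Matrix.cons_val_one, Matrix.vecCons_inj, and_true]
  refine ⟨?_, ?_, ?_, ?_⟩ <;> field_simp <;> ring

theorem gammaVF_rotatesAt_Ma (hU : a ^ 2 + b ^ 2 ≠ 0) :
    RotatesAt (GammaVF k1 k2 k3 a b pa pb) (lam a b pa pb) (Ma1 k1 k2 k3) (Ma2 k1 k2 k3)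
      a b pa pb := by
  have hpos : 0 < a ^ 2 + b ^ 2 := lt_of_le_of_ne (by positivity) hU.symm
  have h1 : HasPartialsAt (Ma1 k1 k2 k3) _ a b pa pb :=
    ((hasPartialsAt_Jang.mul coord_pa).sub
      ((((const k2).mul coord_b).sub ((const k3).mul coord_a)).mul coord_a)).div_sqrt
      hasPartialsAt_normSq hpos
  have h2 : HasPartialsAt (Ma2 k1 k2 k3) _ a b pa pb :=
    (((hasPartialsAt_Jang.neg.mul coord_pb).sub ((const (2 * k1)).mul coord_a)).add
      ((((const k2).mul coord_b).sub ((const k3).mul coord_a)).mul coord_b)).div_sqrt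
      hasPartialsAt_normSq hpos
  refine ⟨⟨_, h1⟩, ⟨_, h2⟩, ?_, ?_⟩ <;>
  · simp only [h1.ddR_eq, h2.ddR_eq, gammaVF_eq k1 k2 k3 a b pa pb hU, Pi.add_apply,
      Pi.sub_apply, Pi.neg_apply, Pi.zero_apply, Matrix.cons_val, Matrix.cons_val_zero, Matrix.cons_val_one,
      Ma1, Ma2, lam, Jang]
    field_simp
    ring

theorem gammaVF_rotatesAt_Mb (hU : a ^ 2 + b ^ 2 ≠ 0) :
    RotatesAt (GammaVF k1 k2 k3 a b pa pb) (lam a b pa pb) (Mb1 k1 k2 k3) (Mb2 k1 k2 k3)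
      a b pa pb := by
  have hpos : 0 < a ^ 2 + b ^ 2 := lt_of_le_of_ne (by positivity) hU.symm
  have h1 : HasPartialsAt (Mb1 k1 k2 k3) _ a b pa pb :=
    ((hasPartialsAt_Jang.mul coord_pb).sub
      ((((const k2).mul coord_b).sub ((const k3).mul coord_a)).mul coord_b)).div_sqrt
      hasPartialsAt_normSq hpos
  have h2 : HasPartialsAt (Mb2 k1 k2 k3) _ a b pa pb :=
    (((hasPartialsAt_Jang.mul coord_pa).sub ((const (2 * k1)).mul coord_b)).sub
      ((((const k2).mul coord_b).sub ((const k3).mul coord_a)).mul coord_a)).div_sqrt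
      hasPartialsAt_normSq hpos
  refine ⟨⟨_, h1⟩, ⟨_, h2⟩, ?_, ?_⟩ <;>
  · simp only [h1.ddR_eq, h2.ddR_eq, gammaVF_eq k1 k2 k3 a b pa pb hU, Pi.sub_apply,
      Pi.zero_apply, Matrix.cons_val, Matrix.cons_val_zero, Matrix.cons_val_one, Mb1, Mb2, lam, Jang]
    field_simp
    ring

theorem K3fun_eq : K3fun k1 k2 k3 = fun a b pa pb =>
    Ma1 k1 k2 k3 a b pa pb * Mb1 k1 k2 k3 a b pa pb
      + Ma2 k1 k2 k3 a b pa pb * Mb2 k1 k2 k3 a b pa pb := by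
  funext a b pa pb
  simp [K3fun, Mafun, Mbfun, Complex.mul_re]

theorem K4fun_eq : K4fun k1 k2 k3 = fun a b pa pb =>
    Ma2 k1 k2 k3 a b pa pb * Mb1 k1 k2 k3 a b pa pb
      - Ma1 k1 k2 k3 a b pa pb * Mb2 k1 k2 k3 a b pa pb := by
  funext a b pa pb
  simp [K4fun, Mafun, Mbfun, Complex.mul_im, sub_eq_neg_add, mul_comm]

end Kepler

/-- `Γ` is quasi-bi-Hamiltonian with respect to `(ω₀, Ω_{M1})` and
`(ω₀, Ω_{M2})`: `Ω_{M1}(Γ, v) = -λ dK₄[v]` and `Ω_{M2}(Γ, v) = λ dK₃[v]`. -/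
theorem stmt18 (k1 k2 k3 : ℝ) (a b pa pb : ℝ) (hU : a ^ 2 + b ^ 2 ≠ 0) (v : Fin 4 → ℝ) :
    OmM1 k1 k2 k3 a b pa pb (GammaVF k1 k2 k3 a b pa pb) v =
        -(lam a b pa pb) * ddR (K4fun k1 k2 k3) a b pa pb v ∧
      OmM2 k1 k2 k3 a b pa pb (GammaVF k1 k2 k3 a b pa pb) v =
        lam a b pa pb * ddR (K3fun k1 k2 k3) a b pa pb v := by
  have hMa := gammaVF_rotatesAt_Ma k1 k2 k3 a b pa pb hU
  have hMb := gammaVF_rotatesAt_Mb k1 k2 k3 a b pa pb hU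
  rw [OmM1, OmM2, K4fun_eq, K3fun_eq]
  exact ⟨hMa.wedgeR_add_wedgeR hMb v, hMa.neg_wedgeR_add_wedgeR hMb v⟩
end
end

section
/- Let F, G : ℝ → ℝ be differentiable functions and consider on U the parabolic-separable Hamiltonian H = (p_a² + p_b²)/(2(a² + b²)) + (F(a) + G(b))/(a² + b²). Then the quadratic function I₂ = (a p_b − b p_a)·(a p_b + b p_a)/(a² + b²) + 2(a²G(b) − b²F(a))/(a² + b²) is a constant of motion: {I₂, H} = 0 at every point of U. -/
noncomputable section

open Complex

/-! Both `I₂` and `H` are of the form `N / (a² + b²)` with `N` polynomial in the momenta, so the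
quotient rule `∂ₐ(N/S) = (∂ₐN - 2a·N/S)/S` expresses every partial derivative through `N`, `F'`,
`G'`, `I₂` and `H` themselves; the bracket then vanishes by a rational identity. -/

theorem PBR_eq_of_hasDerivAt {f g : ℝ → ℝ → ℝ → ℝ → ℝ} {a b pa pb : ℝ}
    {fa fb fpa fpb ga gb gpa gpb : ℝ}
    (hfa : HasDerivAt (fun t => f t b pa pb) fa a) (hfb : HasDerivAt (fun t => f a t pa pb) fb b)
    (hfpa : HasDerivAt (fun t => f a b t pb) fpa pa)
    (hfpb : HasDerivAt (fun t => f a b pa t) fpb pb)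
    (hga : HasDerivAt (fun t => g t b pa pb) ga a) (hgb : HasDerivAt (fun t => g a t pa pb) gb b)
    (hgpa : HasDerivAt (fun t => g a b t pb) gpa pa)
    (hgpb : HasDerivAt (fun t => g a b pa t) gpb pb) :
    PBR f g a b pa pb = fa * gpa + fb * gpb - fpa * ga - fpb * gb := by
  simp only [PBR, pdaR, pdbR, pdpaR, pdpbR, hfa.deriv, hfb.deriv, hfpa.deriv, hfpb.deriv,
    hga.deriv, hgb.deriv, hgpa.deriv, hgpb.deriv]

theorem HasDerivAt.div_sq_add_sq_left {N : ℝ → ℝ} {n a : ℝ} (b : ℝ) (hN : HasDerivAt N n a)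
    (h : a ^ 2 + b ^ 2 ≠ 0) :
    HasDerivAt (fun t => N t / (t ^ 2 + b ^ 2))
      ((n - 2 * a * (N a / (a ^ 2 + b ^ 2))) / (a ^ 2 + b ^ 2)) a := by
  refine (hN.div ((hasDerivAt_pow 2 a).add_const (b ^ 2)) h).congr_deriv ?_
  field_simp
  ring

theorem HasDerivAt.div_sq_add_sq_right {N : ℝ → ℝ} {n b : ℝ} (a : ℝ) (hN : HasDerivAt N n b)
    (h : a ^ 2 + b ^ 2 ≠ 0) :
    HasDerivAt (fun t => N t / (a ^ 2 + t ^ 2))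
      ((n - 2 * b * (N b / (a ^ 2 + b ^ 2))) / (a ^ 2 + b ^ 2)) b := by
  refine (hN.div ((hasDerivAt_pow 2 b).const_add (a ^ 2)) h).congr_deriv ?_
  field_simp
  ring

def parabolicHamiltonian (F G : ℝ → ℝ) (a b pa pb : ℝ) : ℝ :=
  ((pa ^ 2 + pb ^ 2) / 2 + F a + G b) / (a ^ 2 + b ^ 2)

def parabolicIntegral (F G : ℝ → ℝ) (a b pa pb : ℝ) : ℝ :=
  ((a * pb) ^ 2 - (b * pa) ^ 2 + 2 * (a ^ 2 * G b - b ^ 2 * F a)) / (a ^ 2 + b ^ 2)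

section PartialDerivatives

variable {F G : ℝ → ℝ} {a b : ℝ} (pa pb : ℝ)

theorem hasDerivAt_parabolicHamiltonian_a (hF : DifferentiableAt ℝ F a)
    (h : a ^ 2 + b ^ 2 ≠ 0) :
    HasDerivAt (fun t => parabolicHamiltonian F G t b pa pb)
      ((deriv F a - 2 * a * parabolicHamiltonian F G a b pa pb) / (a ^ 2 + b ^ 2)) a :=
  HasDerivAt.div_sq_add_sq_left b
    ((hF.hasDerivAt.const_add ((pa ^ 2 + pb ^ 2) / 2)).add_const (G b)) h

theorem hasDerivAt_parabolicHamiltonian_b (hG : DifferentiableAt ℝ G b)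
    (h : a ^ 2 + b ^ 2 ≠ 0) :
    HasDerivAt (fun t => parabolicHamiltonian F G a t pa pb)
      ((deriv G b - 2 * b * parabolicHamiltonian F G a b pa pb) / (a ^ 2 + b ^ 2)) b :=
  HasDerivAt.div_sq_add_sq_right a (hG.hasDerivAt.const_add _) h

theorem hasDerivAt_parabolicHamiltonian_pa :
    HasDerivAt (fun t => parabolicHamiltonian F G a b t pb) (pa / (a ^ 2 + b ^ 2)) pa := by
  refine (((((hasDerivAt_pow 2 pa).add_const (pb ^ 2)).div_const 2).add_const (F a)).add_const
    (G b)).div_const _ |>.congr_deriv ?_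
  ring

theorem hasDerivAt_parabolicHamiltonian_pb :
    HasDerivAt (fun t => parabolicHamiltonian F G a b pa t) (pb / (a ^ 2 + b ^ 2)) pb := by
  refine (((((hasDerivAt_pow 2 pb).const_add (pa ^ 2)).div_const 2).add_const (F a)).add_const
    (G b)).div_const _ |>.congr_deriv ?_
  ring

theorem hasDerivAt_parabolicIntegral_a (hF : DifferentiableAt ℝ F a) (h : a ^ 2 + b ^ 2 ≠ 0) :
    HasDerivAt (fun t => parabolicIntegral F G t b pa pb)
      ((2 * a * pb ^ 2 + 2 * (2 * a * G b - b ^ 2 * deriv F a)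
        - 2 * a * parabolicIntegral F G a b pa pb) / (a ^ 2 + b ^ 2)) a := by
  refine HasDerivAt.div_sq_add_sq_left b ?_ h
  refine ((((hasDerivAt_id' a).mul_const pb).pow 2).sub_const ((b * pa) ^ 2)).add
    ((((hasDerivAt_pow 2 a).mul_const (G b)).sub (hF.hasDerivAt.const_mul (b ^ 2))).const_mul 2)
    |>.congr_deriv ?_
  ring

theorem hasDerivAt_parabolicIntegral_b (hG : DifferentiableAt ℝ G b) (h : a ^ 2 + b ^ 2 ≠ 0) :
    HasDerivAt (fun t => parabolicIntegral F G a t pa pb)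
      ((-2 * b * pa ^ 2 + 2 * (a ^ 2 * deriv G b - 2 * b * F a)
        - 2 * b * parabolicIntegral F G a b pa pb) / (a ^ 2 + b ^ 2)) b := by
  refine HasDerivAt.div_sq_add_sq_right a ?_ h
  refine ((((hasDerivAt_id' b).mul_const pa).pow 2).const_sub ((a * pb) ^ 2)).add
    (((hG.hasDerivAt.const_mul (a ^ 2)).sub ((hasDerivAt_pow 2 b).mul_const (F a))).const_mul 2)
    |>.congr_deriv ?_
  ring

theorem hasDerivAt_parabolicIntegral_pa :
    HasDerivAt (fun t => parabolicIntegral F G a b t pb)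
      (-2 * b ^ 2 * pa / (a ^ 2 + b ^ 2)) pa := by
  refine (((((hasDerivAt_id' pa).const_mul b).pow 2).const_sub ((a * pb) ^ 2)).add_const
    (2 * (a ^ 2 * G b - b ^ 2 * F a))).div_const _ |>.congr_deriv ?_
  ring

theorem hasDerivAt_parabolicIntegral_pb :
    HasDerivAt (fun t => parabolicIntegral F G a b pa t)
      (2 * a ^ 2 * pb / (a ^ 2 + b ^ 2)) pb := by
  refine (((((hasDerivAt_id' pb).const_mul a).pow 2).sub_const ((b * pa) ^ 2)).add_const
    (2 * (a ^ 2 * G b - b ^ 2 * F a))).div_const _ |>.congr_deriv ?_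
  ring

end PartialDerivatives

theorem PBR_parabolicIntegral_parabolicHamiltonian {F G : ℝ → ℝ} {a b : ℝ} (pa pb : ℝ)
    (hF : DifferentiableAt ℝ F a) (hG : DifferentiableAt ℝ G b) (h : a ^ 2 + b ^ 2 ≠ 0) :
    PBR (parabolicIntegral F G) (parabolicHamiltonian F G) a b pa pb = 0 := by
  rw [PBR_eq_of_hasDerivAt (hasDerivAt_parabolicIntegral_a pa pb hF h)
    (hasDerivAt_parabolicIntegral_b pa pb hG h) (hasDerivAt_parabolicIntegral_pa pa pb)
    (hasDerivAt_parabolicIntegral_pb pa pb) (hasDerivAt_parabolicHamiltonian_a pa pb hF h)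
    (hasDerivAt_parabolicHamiltonian_b pa pb hG h) (hasDerivAt_parabolicHamiltonian_pa pa pb)
    (hasDerivAt_parabolicHamiltonian_pb pa pb)]
  simp only [parabolicIntegral, parabolicHamiltonian]
  field_simp
  ring

/-- for the parabolic-separable Hamiltonian
`H = (p_a² + p_b²)/(2(a² + b²)) + (F(a) + G(b))/(a² + b²)`, the quadratic function
`I₂ = J·(a p_b + b p_a)/(a² + b²) + 2(a²G(b) − b²F(a))/(a² + b²)` is a constant of motion. -/
theorem stmt19 (F G : ℝ → ℝ) (hF : Differentiable ℝ F) (hG : Differentiable ℝ G)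
    (a b pa pb : ℝ) (hU : a ^ 2 + b ^ 2 ≠ 0) :
    PBR (fun a b pa pb =>
        (a * pb - b * pa) * (a * pb + b * pa) / (a ^ 2 + b ^ 2)
          + 2 * (a ^ 2 * G b - b ^ 2 * F a) / (a ^ 2 + b ^ 2))
      (fun a b pa pb =>
        (pa ^ 2 + pb ^ 2) / (2 * (a ^ 2 + b ^ 2)) + (F a + G b) / (a ^ 2 + b ^ 2))
      a b pa pb = 0 := by
  have hI : (fun a b pa pb : ℝ =>
      (a * pb - b * pa) * (a * pb + b * pa) / (a ^ 2 + b ^ 2)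
        + 2 * (a ^ 2 * G b - b ^ 2 * F a) / (a ^ 2 + b ^ 2)) = parabolicIntegral F G := by
    funext a b pa pb
    rw [parabolicIntegral, ← add_div]
    ring
  have hH : (fun a b pa pb : ℝ =>
      (pa ^ 2 + pb ^ 2) / (2 * (a ^ 2 + b ^ 2)) + (F a + G b) / (a ^ 2 + b ^ 2)) =
      parabolicHamiltonian F G := by
    funext a b pa pb
    rw [parabolicHamiltonian, ← div_div, ← add_div, add_assoc]
  rw [hI, hH]
  exact PBR_parabolicIntegral_parabolicHamiltonian pa pb (hF a) (hG b) hU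
end
end
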